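/- arXiv:2312.11963 — 9 statements merged into one kernel-verified Lean document; each statement's English description precedes it below -/
import Mathlib

section
/- Let G = (V,E) be a finite simple graph and let A ⊆ V be a globally minimal defensive alliance of G. Then the subgraph of G induced by A is connected. -/
/-- `degIn G X v` is the number of neighbors of `v` lying in the set `X`
(denoted `deg_X(v)` in the paper). -/
noncomputable def degIn {V : Type*} (G : SimpleGraph V) (X : Set V) (v : V) : ℕ :=
  {u | u ∈ X ∧ G.Adj v u}.ncard

/-- `A` is a defensive alliance of `G`: every `v ∈ A` satisfies
`deg_A(v) + 1 ≥ deg_{V∖A}(v)`. -/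
def IsDefensiveAlliance {V : Type*} (G : SimpleGraph V) (A : Set V) : Prop :=
  ∀ v ∈ A, degIn G A v + 1 ≥ degIn G Aᶜ v

/-- A nonempty defensive alliance is globally minimal if no nonempty proper
subset is a defensive alliance. -/
def IsGloballyMinimalDA {V : Type*} (G : SimpleGraph V) (A : Set V) : Prop :=
  A.Nonempty ∧ IsDefensiveAlliance G A ∧
    ∀ B : Set V, B ⊂ A → B.Nonempty → ¬ IsDefensiveAlliance G B

/-- A nonempty defensive alliance is locally minimal if for every `v ∈ A`,
the set `A ∖ {v}` is not a nonempty defensive alliance. -/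
def IsLocallyMinimalDA {V : Type*} (G : SimpleGraph V) (A : Set V) : Prop :=
  A.Nonempty ∧ IsDefensiveAlliance G A ∧
    ∀ v ∈ A, ¬ ((A \ {v}).Nonempty ∧ IsDefensiveAlliance G (A \ {v}))

/-!
Adjacency inside `A` never leaves a connected component `C` of `G[A]`, so every vertex of `C`
has the same neighbours in `C` as in `A`, and the same neighbours outside `C` as outside `A`.
Hence `C` inherits the defensive-alliance inequality from `A`; if `G[A]` were disconnected, `C`
would be a nonempty proper sub-alliance of `A`.
-/

section AdjClosed

variable {V : Type*} {G : SimpleGraph V} {A B : Set V}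

lemma degIn_eq_of_adjClosed (hBA : B ⊆ A) (hB : ∀ w ∈ B, ∀ u ∈ A, G.Adj w u → u ∈ B)
    {w : V} (hw : w ∈ B) : degIn G B w = degIn G A w := by
  unfold degIn
  congr 1
  ext u
  exact ⟨fun ⟨huB, hwu⟩ => ⟨hBA huB, hwu⟩, fun ⟨huA, hwu⟩ => ⟨hB w hw u huA hwu, hwu⟩⟩

lemma degIn_compl_eq_of_adjClosed (hBA : B ⊆ A) (hB : ∀ w ∈ B, ∀ u ∈ A, G.Adj w u → u ∈ B)
    {w : V} (hw : w ∈ B) : degIn G Bᶜ w = degIn G Aᶜ w := by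
  unfold degIn
  congr 1
  ext u
  exact ⟨fun ⟨huB, hwu⟩ => ⟨fun huA => huB (hB w hw u huA hwu), hwu⟩,
    fun ⟨huA, hwu⟩ => ⟨fun huB => huA (hBA huB), hwu⟩⟩

lemma IsDefensiveAlliance.of_adjClosed (hA : IsDefensiveAlliance G A) (hBA : B ⊆ A)
    (hB : ∀ w ∈ B, ∀ u ∈ A, G.Adj w u → u ∈ B) : IsDefensiveAlliance G B := by
  intro w hw
  rw [degIn_eq_of_adjClosed hBA hB hw, degIn_compl_eq_of_adjClosed hBA hB hw]
  exact hA w (hBA hw)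

end AdjClosed

lemma SimpleGraph.ConnectedComponent.image_val_supp_adjClosed {V : Type*} {G : SimpleGraph V}
    {A : Set V} (C : (G.induce A).ConnectedComponent) :
    ∀ w ∈ Subtype.val '' C.supp, ∀ u ∈ A, G.Adj w u → u ∈ Subtype.val '' C.supp := by
  rintro _ ⟨w, hw, rfl⟩ u hu hwu
  refine ⟨⟨u, hu⟩, ?_, rfl⟩
  rw [SimpleGraph.ConnectedComponent.mem_supp_iff] at hw ⊢
  rw [← hw, SimpleGraph.ConnectedComponent.eq]
  exact (show (G.induce A).Adj w ⟨u, hu⟩ from hwu).reachable.symm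

theorem globallyMinimalDA_induce_connected_general {V : Type*}
    (G : SimpleGraph V) (A : Set V) (hA : IsGloballyMinimalDA G A) :
    (G.induce A).Connected := by
  obtain ⟨hne, hDA, hmin⟩ := hA
  rw [SimpleGraph.connected_iff]
  refine ⟨fun x y => ?_, hne.to_subtype⟩
  by_contra hxy
  set C := (G.induce A).connectedComponentMk x
  have hCA : Subtype.val '' C.supp ⊆ A := Subtype.coe_image_subset A C.supp
  have hy : (y : V) ∉ Subtype.val '' C.supp := by
    rintro ⟨u, hu, hu_eq⟩
    rw [Subtype.ext hu_eq, SimpleGraph.ConnectedComponent.mem_supp_iff,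
      SimpleGraph.ConnectedComponent.eq] at hu
    exact hxy hu.symm
  exact hmin _ ⟨hCA, fun h => hy (h y.2)⟩ ⟨x, x, rfl, rfl⟩
    (hDA.of_adjClosed hCA C.image_val_supp_adjClosed)

/-- Every globally minimal defensive alliance of a finite simple
graph induces a connected subgraph. -/
theorem globallyMinimalDA_induce_connected {V : Type*} [Fintype V]
    (G : SimpleGraph V) (A : Set V) (hA : IsGloballyMinimalDA G A) :
    (G.induce A).Connected :=
  globallyMinimalDA_induce_connected_general G A hA
end

section
/- For every n ≥ 3, the path P_n has exactly n − 1 globally minimal defensive alliances. -/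
/-! In a graph of maximum degree two, a vertex of `A` satisfies the alliance inequality iff it is a
leaf or has a neighbour in `A`. So in `P_n` every nonempty defensive alliance contains an endpoint
or an edge, hence one of `{v₁}`, `{v_n}`, `{v_i, v_{i+1}}` (`2 ≤ i ≤ n - 2`). These `n - 1` sets are
themselves alliances and none contains another, so they are exactly the globally minimal ones. -/

open SimpleGraph Set

section DefensiveAlliance

variable {V : Type*} {G : SimpleGraph V} {A : Set V}

lemma degIn_eq_ncard_inter (X : Set V) (v : V) : degIn G X v = (G.neighborSet v ∩ X).ncard := by
  rw [degIn, inter_comm]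
  rfl

lemma degIn_add_degIn_compl [Finite V] (A : Set V) (v : V) :
    degIn G A v + degIn G Aᶜ v = (G.neighborSet v).ncard := by
  rw [degIn_eq_ncard_inter, degIn_eq_ncard_inter, ← sdiff_eq, ncard_inter_add_ncard_sdiff_eq_ncard]

lemma degIn_pos_iff [Finite V] (X : Set V) (v : V) :
    0 < degIn G X v ↔ ∃ u ∈ X, G.Adj v u := by
  rw [degIn, ncard_pos]
  rfl

lemma isDefensiveAlliance_iff_ncard_neighborSet_le [Finite V] :
    IsDefensiveAlliance G A ↔ ∀ v ∈ A, (G.neighborSet v).ncard ≤ 2 * degIn G A v + 1 := by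
  refine forall₂_congr fun v _ => ?_
  have := degIn_add_degIn_compl (G := G) A v
  omega

lemma isDefensiveAlliance_iff_of_ncard_neighborSet_le_two [Finite V]
    (hG : ∀ v, (G.neighborSet v).ncard ≤ 2) :
    IsDefensiveAlliance G A ↔ ∀ v ∈ A, (G.neighborSet v).ncard ≤ 1 ∨ ∃ u ∈ A, G.Adj v u := by
  rw [isDefensiveAlliance_iff_ncard_neighborSet_le]
  refine forall₂_congr fun v _ => ?_
  rw [← degIn_pos_iff]
  have := hG v
  omega

lemma isGloballyMinimalDA_iff_mem {S : Set (Set V)}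
    (hS : ∀ B ∈ S, B.Nonempty ∧ IsDefensiveAlliance G B) (hanti : IsAntichain (· ⊆ ·) S)
    (hcover : ∀ B : Set V, B.Nonempty → IsDefensiveAlliance G B → ∃ C ∈ S, C ⊆ B) :
    IsGloballyMinimalDA G A ↔ A ∈ S := by
  constructor
  · rintro ⟨hne, hA, hmin⟩
    obtain ⟨B, hBS, hBA⟩ := hcover A hne hA
    obtain rfl | hBA := hBA.eq_or_ssubset
    · exact hBS
    · exact absurd (hS B hBS).2 (hmin B hBA (hS B hBS).1)
  · intro hAS
    refine ⟨(hS A hAS).1, (hS A hAS).2, fun B hBA hBne hB => ?_⟩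
    obtain ⟨C, hCS, hCB⟩ := hcover B hBne hB
    exact hanti hCS hAS (hCB.trans_ssubset hBA).ne (hCB.trans hBA.subset)

end DefensiveAlliance

section PathGraph

variable {n : ℕ}

lemma pathGraph_ncard_neighborSet_le_two (v : Fin n) :
    ((pathGraph n).neighborSet v).ncard ≤ 2 := by
  rw [← not_lt, two_lt_ncard]
  rintro ⟨a, ha, b, hb, c, hc, hab, hac, hbc⟩
  simp only [mem_neighborSet, pathGraph_adj, ne_eq, Fin.ext_iff] at *
  omega

lemma pathGraph_ncard_neighborSet_le_one_iff (v : Fin n) :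
    ((pathGraph n).neighborSet v).ncard ≤ 1 ↔ v.val = 0 ∨ v.val + 1 = n := by
  rw [ncard_le_one]
  refine ⟨fun h => ?_, fun hv a ha b hb => ?_⟩
  · by_contra! hv
    have hne := h ⟨v.val - 1, by omega⟩ (by simp [pathGraph_adj]; omega)
      ⟨v.val + 1, by omega⟩ (by simp [pathGraph_adj])
    exact absurd (congrArg Fin.val hne) (by dsimp; omega)
  · simp only [mem_neighborSet, pathGraph_adj] at ha hb
    ext
    omega

lemma pathGraph_isDefensiveAlliance_iff {A : Set (Fin n)} :
    IsDefensiveAlliance (pathGraph n) A ↔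
      ∀ v ∈ A, v.val = 0 ∨ v.val + 1 = n ∨ ∃ u ∈ A, v.val + 1 = u.val ∨ u.val + 1 = v.val := by
  simp only [isDefensiveAlliance_iff_of_ncard_neighborSet_le_two pathGraph_ncard_neighborSet_le_two,
    pathGraph_ncard_neighborSet_le_one_iff, pathGraph_adj, or_assoc]

/-- For `n ≥ 3` and `k = 0, …, n - 2` these are `{0}, {1, 2}, …, {n - 3, n - 2}, {n - 1}`: the
edge `{k, k + 1}` of the path, except that an edge at an end of the path keeps only its endpoint. -/
def edgeAlliance (n : ℕ) (k : Fin (n - 1)) : Set (Fin n) :=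
  {v | v.val = k.val ∧ k.val + 2 ≠ n ∨ v.val = k.val + 1 ∧ k.val ≠ 0}

lemma edgeAlliance_nonempty (hn : 3 ≤ n) (k : Fin (n - 1)) : (edgeAlliance n k).Nonempty := by
  by_cases hk : k.val = 0
  · exact ⟨⟨k.val, by omega⟩, Or.inl ⟨rfl, by omega⟩⟩
  · exact ⟨⟨k.val + 1, by omega⟩, Or.inr ⟨rfl, hk⟩⟩

lemma isDefensiveAlliance_edgeAlliance (k : Fin (n - 1)) :
    IsDefensiveAlliance (pathGraph n) (edgeAlliance n k) := by
  rw [pathGraph_isDefensiveAlliance_iff]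
  rintro v (⟨hv, hk⟩ | ⟨hv, hk⟩)
  · by_cases hk0 : k.val = 0
    · exact Or.inl (by omega)
    · exact Or.inr (Or.inr ⟨⟨k.val + 1, by omega⟩, Or.inr ⟨rfl, hk0⟩, by dsimp; omega⟩)
  · by_cases hkn : k.val + 2 = n
    · exact Or.inr (Or.inl (by omega))
    · exact Or.inr (Or.inr ⟨⟨k.val, by omega⟩, Or.inl ⟨rfl, hkn⟩, by dsimp; omega⟩)

lemma edgeAlliance_subset_edgeAlliance_iff (hn : 3 ≤ n) {j k : Fin (n - 1)} :
    edgeAlliance n j ⊆ edgeAlliance n k ↔ j = k := by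
  refine ⟨fun h => ?_, fun h => h ▸ subset_rfl⟩
  have h₀ := @h ⟨j.val, by omega⟩
  have h₁ := @h ⟨j.val + 1, by omega⟩
  simp only [edgeAlliance, mem_ofPred_eq, true_and, imp_iff_not_or] at h₀ h₁
  have := j.isLt
  have := k.isLt
  ext
  omega

lemma edgeAlliance_injective (hn : 3 ≤ n) : Function.Injective (edgeAlliance n) :=
  fun _ _ h => (edgeAlliance_subset_edgeAlliance_iff hn).1 h.subset

lemma isAntichain_range_edgeAlliance (hn : 3 ≤ n) :
    IsAntichain (· ⊆ ·) (range (edgeAlliance n)) := by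
  rintro _ ⟨j, rfl⟩ _ ⟨k, rfl⟩ hne h
  exact hne (congrArg _ ((edgeAlliance_subset_edgeAlliance_iff hn).1 h))

lemma exists_edgeAlliance_subset (hn : 3 ≤ n) {A : Set (Fin n)} (hne : A.Nonempty)
    (hA : IsDefensiveAlliance (pathGraph n) A) : ∃ k, edgeAlliance n k ⊆ A := by
  obtain ⟨v, hv⟩ := hne
  rcases pathGraph_isDefensiveAlliance_iff.1 hA v hv with h | h | ⟨u, hu, h | h⟩
  · refine ⟨⟨0, by omega⟩, fun w hw => ?_⟩
    rwa [show w = v by simp only [edgeAlliance, mem_ofPred_eq] at hw; omega]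
  · refine ⟨⟨n - 2, by omega⟩, fun w hw => ?_⟩
    rwa [show w = v by simp only [edgeAlliance, mem_ofPred_eq] at hw; omega]
  · refine ⟨⟨v.val, by omega⟩, fun w hw => ?_⟩
    obtain rfl | rfl : w = v ∨ w = u := by
      simp only [edgeAlliance, mem_ofPred_eq, Fin.ext_iff] at hw ⊢; omega
    exacts [hv, hu]
  · refine ⟨⟨u.val, by omega⟩, fun w hw => ?_⟩
    obtain rfl | rfl : w = u ∨ w = v := by
      simp only [edgeAlliance, mem_ofPred_eq, Fin.ext_iff] at hw ⊢; omega
    exacts [hu, hv]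

end PathGraph

/-- For every `n ≥ 3`, the path `P_n` has exactly `n - 1`
globally minimal defensive alliances. -/
theorem card_globallyMinimalDA_pathGraph (n : ℕ) (hn : 3 ≤ n) :
    Nat.card {A : Set (Fin n) // IsGloballyMinimalDA (SimpleGraph.pathGraph n) A} =
      n - 1 := by
  have hminimal_iff (A : Set (Fin n)) :
      IsGloballyMinimalDA (pathGraph n) A ↔ A ∈ range (edgeAlliance n) := by
    refine isGloballyMinimalDA_iff_mem ?_ (isAntichain_range_edgeAlliance hn) fun B hne hB => ?_
    · rintro _ ⟨k, rfl⟩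
      exact ⟨edgeAlliance_nonempty hn k, isDefensiveAlliance_edgeAlliance k⟩
    · obtain ⟨k, hk⟩ := exists_edgeAlliance_subset hn hne hB
      exact ⟨_, mem_range_self k, hk⟩
  calc Nat.card {A // IsGloballyMinimalDA (pathGraph n) A}
      = Nat.card (range (edgeAlliance n)) := Nat.card_congr (Equiv.subtypeEquivRight hminimal_iff)
    _ = n - 1 := by rw [Nat.card_range_of_injective (edgeAlliance_injective hn), Nat.card_fin]
end

section
/- Let n > 2 and let G be the complete bipartite graph K_{2,n−2} with parts {u_1,u_2} and {v_1,…,v_{n−2}}. For every subset A′ ⊆ {v_1,…,v_{n−2}} with |A′| = ⌈(n−3)/2⌉, the set A = {u_1} ∪ A′ is a globally minimal defensive alliance of G. -/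
/-!
In `K_{α,β}` a vertex is adjacent to exactly the other side, so the alliance condition for `A`
only involves the traces `A_α`, `A_β` of `A` on the two sides: at a vertex of `A_α` it reads
`2 |A_β| + 1 ≥ |β|`, at a vertex of `A_β` it reads `|α| - |A_α| ≤ |A_α| + 1`.
With `|α| = 2`, `A_α = {u₁}` and `|A_β| = ⌊|β| / 2⌋` (which is `⌈(n - 3) / 2⌉` for `|β| = n - 2`)
both hold, the first one with no slack. A proper nonempty subset `B` either still contains `u₁`,
and then `|B_β| < ⌊|β| / 2⌋` breaks the condition at `u₁`, or it lies in `β`, and then each of its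
vertices has both neighbours outside `B`.
-/

namespace CompleteBipartite

open Set

variable {α β : Type*}

lemma degIn_inl (X : Set (α ⊕ β)) (a : α) :
    degIn (completeBipartiteGraph α β) X (.inl a) = (Sum.inr ⁻¹' X).ncard := by
  have h : {u | u ∈ X ∧ (completeBipartiteGraph α β).Adj (.inl a) u} =
      Sum.inr '' (Sum.inr ⁻¹' X) := by
    ext (_ | _) <;> simp
  rw [degIn, h, ncard_image_of_injective _ Sum.inr_injective]

lemma degIn_inr (X : Set (α ⊕ β)) (b : β) :
    degIn (completeBipartiteGraph α β) X (.inr b) = (Sum.inl ⁻¹' X).ncard := by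
  have h : {u | u ∈ X ∧ (completeBipartiteGraph α β).Adj (.inr b) u} =
      Sum.inl '' (Sum.inl ⁻¹' X) := by
    ext (_ | _) <;> simp
  rw [degIn, h, ncard_image_of_injective _ Sum.inl_injective]

theorem isDefensiveAlliance_iff {X : Set (α ⊕ β)} :
    IsDefensiveAlliance (completeBipartiteGraph α β) X ↔
      ((Sum.inl ⁻¹' X).Nonempty → (Sum.inr ⁻¹' X)ᶜ.ncard ≤ (Sum.inr ⁻¹' X).ncard + 1) ∧
      ((Sum.inr ⁻¹' X).Nonempty → (Sum.inl ⁻¹' X)ᶜ.ncard ≤ (Sum.inl ⁻¹' X).ncard + 1) := by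
  simp only [IsDefensiveAlliance, Sum.forall, degIn_inl, degIn_inr, preimage_compl, Set.Nonempty,
    mem_preimage, forall_exists_index, ge_iff_le]

lemma not_isDefensiveAlliance_of_preimage_inl_eq_empty (hα : 1 < Nat.card α)
    {B : Set (α ⊕ β)} (hB : B.Nonempty) (hBl : Sum.inl ⁻¹' B = ∅) :
    ¬ IsDefensiveAlliance (completeBipartiteGraph α β) B := by
  obtain ⟨_ | b, hb⟩ := hB
  · exact (hBl.subset hb).elim
  rw [isDefensiveAlliance_iff, hBl, compl_empty, ncard_univ, ncard_empty]
  exact fun h => hα.not_ge (h.2 ⟨b, hb⟩)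

lemma not_isDefensiveAlliance_of_two_mul_ncard_add_one_lt [Finite β]
    {B : Set (α ⊕ β)} (hBl : (Sum.inl ⁻¹' B).Nonempty)
    (hBr : 2 * (Sum.inr ⁻¹' B).ncard + 1 < Nat.card β) :
    ¬ IsDefensiveAlliance (completeBipartiteGraph α β) B := by
  rw [isDefensiveAlliance_iff, ncard_compl]
  intro h
  have := h.1 hBl
  omega

theorem isGloballyMinimalDA_inl_union_image_inr [Finite β] (hα : Nat.card α = 2) (a : α)
    {S : Set β} (hS : S.ncard = Nat.card β / 2) :
    IsGloballyMinimalDA (completeBipartiteGraph α β) ({Sum.inl a} ∪ Sum.inr '' S) := by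
  have hl : Sum.inl ⁻¹' ({Sum.inl a} ∪ Sum.inr '' S) = {a} := by ext; simp
  have hr : Sum.inr ⁻¹' ({Sum.inl a} ∪ Sum.inr '' S) = S := by ext; simp
  have : Finite α := Nat.finite_of_card_ne_zero (by omega)
  refine ⟨⟨_, .inl rfl⟩, ?_, fun B hBA hB => ?_⟩
  · rw [isDefensiveAlliance_iff, hl, hr, ncard_compl, ncard_compl, ncard_singleton]
    omega
  have hlt := sumEquiv.lt_iff_lt.mpr hBA
  simp only [sumEquiv_apply, hl, hr, Prod.mk_lt_mk] at hlt
  rcases subset_singleton_iff_eq.mp (hlt.elim (·.1.le) (·.1)) with hBl | hBl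
  · exact not_isDefensiveAlliance_of_preimage_inl_eq_empty (by omega) hB hBl
  · have hBr : Sum.inr ⁻¹' B ⊂ S := by
      rcases hlt with h | h
      · exact absurd hBl h.1.ne
      · exact h.2
    refine not_isDefensiveAlliance_of_two_mul_ncard_add_one_lt
      (hBl ▸ singleton_nonempty a) ?_
    have := ncard_lt_ncard hBr
    omega

end CompleteBipartite

theorem globallyMinimalDA_completeBipartite_general (n : ℕ)
    (A' : Set (Fin (n - 2))) (hcard : A'.ncard = (n - 3 + 1) / 2) :
    IsGloballyMinimalDA (completeBipartiteGraph (Fin 2) (Fin (n - 2)))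
      ({Sum.inl 0} ∪ (Sum.inr '' A')) :=
  CompleteBipartite.isGloballyMinimalDA_inl_union_image_inr (by simp) 0
    (by rw [hcard, Nat.card_eq_fintype_card, Fintype.card_fin]; omega)

/-- In `K_{2,n-2}` (with parts `{u_1,u_2}` and `{v_1,…,v_{n-2}}`,
here `u_1 = Sum.inl 0` and the `v_i` are the `Sum.inr` vertices), for every
`A' ⊆ {v_1,…,v_{n-2}}` with `|A'| = ⌈(n-3)/2⌉`, the set `{u_1} ∪ A'` is a
globally minimal defensive alliance. -/
theorem globallyMinimalDA_completeBipartite (n : ℕ) (hn : 2 < n)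
    (A' : Set (Fin (n - 2))) (hcard : A'.ncard = (n - 3 + 1) / 2) :
    IsGloballyMinimalDA (completeBipartiteGraph (Fin 2) (Fin (n - 2)))
      ({Sum.inl 0} ∪ (Sum.inr '' A')) :=
  globallyMinimalDA_completeBipartite_general n A' hcard
end

section
/- Let n > 2. The complete bipartite graph K_{2,n−2} has at least binom(n−2, ⌈(n−3)/2⌉) distinct globally minimal defensive alliances. -/
/-!
In `K_{2,m}`, take one of the two hub vertices together with exactly `⌊m/2⌋` leaves. The hub
then has `⌊m/2⌋` neighbours inside and `⌈m/2⌉ ≤ ⌊m/2⌋ + 1` outside, and every leaf has one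
neighbour inside and one outside, so the set is a defensive alliance. It is globally minimal:
a proper subset keeping the hub loses a leaf and the hub is outnumbered, while a subset
without the hub leaves its leaves with no neighbour inside against two outside. Distinct
choices of leaves give distinct alliances, whence at least `binom(m, ⌊m/2⌋)` of them; this
dominates `binom(m, k)` for every `k`.
-/

open Set

variable {α β : Type*}

lemma degIn_completeBipartiteGraph_inl (A : Set (α ⊕ β)) (a : α) :
    degIn (completeBipartiteGraph α β) A (Sum.inl a) = (Sum.inr ⁻¹' A).ncard := by
  rw [degIn, ← ncard_image_of_injective (Sum.inr ⁻¹' A) Sum.inr_injective]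
  congr 1
  ext u
  cases u <;> simp

lemma degIn_completeBipartiteGraph_inr (A : Set (α ⊕ β)) (b : β) :
    degIn (completeBipartiteGraph α β) A (Sum.inr b) = (Sum.inl ⁻¹' A).ncard := by
  rw [degIn, ← ncard_image_of_injective (Sum.inl ⁻¹' A) Sum.inl_injective]
  congr 1
  ext u
  cases u <;> simp

lemma preimage_inl_insert_inl_image_inr (a : α) (S : Set β) :
    Sum.inl ⁻¹' (insert (Sum.inl a) (Sum.inr '' S) : Set (α ⊕ β)) = {a} := by
  ext
  simp

lemma preimage_inr_insert_inl_image_inr (a : α) (S : Set β) :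
    Sum.inr ⁻¹' (insert (Sum.inl a) (Sum.inr '' S) : Set (α ⊕ β)) = S := by
  ext
  simp

lemma isDefensiveAlliance_completeBipartiteGraph_iff [Finite α] [Finite β] (A : Set (α ⊕ β)) :
    IsDefensiveAlliance (completeBipartiteGraph α β) A ↔
      (∀ a, Sum.inl a ∈ A → Nat.card β ≤ 2 * (Sum.inr ⁻¹' A).ncard + 1) ∧
        ∀ b, Sum.inr b ∈ A → Nat.card α ≤ 2 * (Sum.inl ⁻¹' A).ncard + 1 := by
  have hα := ncard_add_ncard_compl (Sum.inl ⁻¹' A)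
  have hβ := ncard_add_ncard_compl (Sum.inr ⁻¹' A)
  simp only [IsDefensiveAlliance, Sum.forall, degIn_completeBipartiteGraph_inl,
    degIn_completeBipartiteGraph_inr, preimage_compl]
  exact and_congr (forall₂_congr fun _ _ => by omega) (forall₂_congr fun _ _ => by omega)

lemma isGloballyMinimalDA_insert_inl_image_inr [Finite α] [Finite β] (hα₂ : 2 ≤ Nat.card α)
    (hα₃ : Nat.card α ≤ 3) (a : α) {S : Set β} (hS : S.ncard = Nat.card β / 2) :
    IsGloballyMinimalDA (completeBipartiteGraph α β) (insert (Sum.inl a) (Sum.inr '' S)) := by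
  set A : Set (α ⊕ β) := insert (Sum.inl a) (Sum.inr '' S)
  have hAl : Sum.inl ⁻¹' A = {a} := preimage_inl_insert_inl_image_inr a S
  have hAr : Sum.inr ⁻¹' A = S := preimage_inr_insert_inl_image_inr a S
  refine ⟨insert_nonempty _ _, ?_, fun B hBA hB hBDA => ?_⟩
  · rw [isDefensiveAlliance_completeBipartiteGraph_iff, hAl, hAr, hS, ncard_singleton]
    exact ⟨fun _ _ => by omega, fun _ _ => by omega⟩
  rw [isDefensiveAlliance_completeBipartiteGraph_iff] at hBDA
  by_cases ha : Sum.inl a ∈ B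
  · have hBr : Sum.inr ⁻¹' B ⊂ S := by
      refine ssubset_of_subset_not_subset (hAr ▸ preimage_mono hBA.subset) fun hSB => ?_
      exact hBA.not_subset (insert_subset ha (image_subset_iff.2 hSB))
    have hlt := ncard_lt_ncard hBr
    have hhub := hBDA.1 a ha
    omega
  · have hBl : Sum.inl ⁻¹' B = ∅ := by
      refine eq_empty_of_forall_notMem fun a' ha' => ?_
      obtain rfl : a' = a := (hAl ▸ preimage_mono hBA.subset ha' : a' ∈ ({a} : Set α))
      exact ha ha'
    obtain ⟨x | b, hx⟩ := hB
    · exact hBl.subset hx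
    · have hleaf := hBDA.2 b hx
      rw [hBl, ncard_empty] at hleaf
      omega

lemma choose_le_card_globallyMinimalDA_completeBipartiteGraph [Finite α] [Fintype β]
    (hα₂ : 2 ≤ Nat.card α) (hα₃ : Nat.card α ≤ 3) :
    (Fintype.card β).choose (Fintype.card β / 2) ≤
      Nat.card {A : Set (α ⊕ β) // IsGloballyMinimalDA (completeBipartiteGraph α β) A} := by
  obtain ⟨a⟩ : Nonempty α := Nat.card_pos_iff.1 (by omega) |>.1
  let f : {S : Finset β // S.card = Fintype.card β / 2} →
      {A : Set (α ⊕ β) // IsGloballyMinimalDA (completeBipartiteGraph α β) A} := fun S =>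
    ⟨_, isGloballyMinimalDA_insert_inl_image_inr hα₂ hα₃ a (S := S) (by simp [S.2])⟩
  have hf : Function.Injective f := by
    rintro ⟨S, _⟩ ⟨T, _⟩ hST
    simpa only [f, preimage_inr_insert_inl_image_inr, Finset.coe_inj, Subtype.mk.injEq] using
      congrArg (fun A => Sum.inr ⁻¹' A.1) hST
  rw [← Fintype.card_finset_len, ← Nat.card_eq_fintype_card]
  exact Nat.card_le_card_of_injective f hf

theorem le_card_globallyMinimalDA_completeBipartite_general (n : ℕ) :
    Nat.choose (n - 2) ((n - 3 + 1) / 2) ≤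
      Nat.card {A : Set (Fin 2 ⊕ Fin (n - 2)) //
        IsGloballyMinimalDA (completeBipartiteGraph (Fin 2) (Fin (n - 2))) A} := by
  have := choose_le_card_globallyMinimalDA_completeBipartiteGraph
    (α := Fin 2) (β := Fin (n - 2)) (by simp) (by simp)
  rw [Fintype.card_fin] at this
  exact (Nat.choose_le_middle _ _).trans this

/-- For `n > 2`, the complete bipartite graph `K_{2,n-2}` has at
least `binom(n-2, ⌈(n-3)/2⌉)` distinct globally minimal defensive alliances. -/
theorem le_card_globallyMinimalDA_completeBipartite (n : ℕ) (hn : 2 < n) :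
    Nat.choose (n - 2) ((n - 3 + 1) / 2) ≤
      Nat.card {A : Set (Fin 2 ⊕ Fin (n - 2)) //
        IsGloballyMinimalDA (completeBipartiteGraph (Fin 2) (Fin (n - 2))) A} :=
  le_card_globallyMinimalDA_completeBipartite_general n
end

section
/- Let k ≥ 2 and let T_k be the spider tree with vertex set {r} ∪ {u_i, u′_i : 1 ≤ i ≤ k} and edges {r,u_i} and {u_i,u′_i} for 1 ≤ i ≤ k. For every subset A′ ⊆ {u_1,…,u_k} with |A′| = ⌈(k−1)/2⌉, the set {r} ∪ A′ is a globally minimal defensive alliance of T_k. -/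
/-- The spider tree `T_k` with root `r = Sum.inl ()`, middle vertices
`u_i = Sum.inr (Sum.inl i)` and leaves `u'_i = Sum.inr (Sum.inr i)`;
edges are `{r, u_i}` and `{u_i, u'_i}` for `1 ≤ i ≤ k`. -/
def spiderTree (k : ℕ) : SimpleGraph (Unit ⊕ Fin k ⊕ Fin k) :=
  SimpleGraph.fromRel (fun a b =>
    (∃ i : Fin k, a = Sum.inl () ∧ b = Sum.inr (Sum.inl i)) ∨
    (∃ i : Fin k, a = Sum.inr (Sum.inl i) ∧ b = Sum.inr (Sum.inr i)))

/-!
The root has `k` neighbours `u_i`, so it is defended by `X` iff at least `⌈(k-1)/2⌉` of them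
lie in `X`; a vertex `u_i` whose leaf is outside `X` is defended iff the root lies in `X`.
Hence a proper nonempty subset of `{r} ∪ A'` either contains `r` but fewer than `⌈(k-1)/2⌉`
vertices `u_i`, or omits `r` and leaves each of its `u_i` undefended.
-/

open Set

section
variable {k : ℕ}

lemma spiderTree_adj_root {x : Unit ⊕ Fin k ⊕ Fin k} :
    (spiderTree k).Adj (Sum.inl ()) x ↔ ∃ i, x = Sum.inr (Sum.inl i) := by
  simp only [spiderTree, SimpleGraph.fromRel_adj]
  aesop

lemma spiderTree_adj_mid {i : Fin k} {x : Unit ⊕ Fin k ⊕ Fin k} :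
    (spiderTree k).Adj (Sum.inr (Sum.inl i)) x ↔ x = Sum.inl () ∨ x = Sum.inr (Sum.inr i) := by
  simp only [spiderTree, SimpleGraph.fromRel_adj]
  aesop

lemma injective_spiderTree_mid :
    Function.Injective (fun i : Fin k => (Sum.inr (Sum.inl i) : Unit ⊕ Fin k ⊕ Fin k)) :=
  Sum.inr_injective.comp Sum.inl_injective

lemma degIn_spiderTree_root (X : Set (Unit ⊕ Fin k ⊕ Fin k)) :
    degIn (spiderTree k) X (Sum.inl ()) = ((fun i => Sum.inr (Sum.inl i)) ⁻¹' X).ncard := by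
  rw [degIn, ← ncard_image_of_injective _ injective_spiderTree_mid]
  congr 1
  ext y
  simp only [mem_ofPred_eq, spiderTree_adj_root, mem_image, mem_preimage]
  aesop

lemma degIn_spiderTree_mid (X : Set (Unit ⊕ Fin k ⊕ Fin k)) (i : Fin k) :
    degIn (spiderTree k) X (Sum.inr (Sum.inl i)) =
      ({Sum.inl (), Sum.inr (Sum.inr i)} ∩ X).ncard := by
  rw [degIn, inter_comm]
  simp only [spiderTree_adj_mid]
  rfl

lemma spiderTree_root_condition_iff (X : Set (Unit ⊕ Fin k ⊕ Fin k)) :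
    degIn (spiderTree k) X (Sum.inl ()) + 1 ≥ degIn (spiderTree k) Xᶜ (Sum.inl ()) ↔
      k ≤ 2 * ((fun i => Sum.inr (Sum.inl i)) ⁻¹' X).ncard + 1 := by
  have hcompl := ncard_add_ncard_compl ((fun i : Fin k => Sum.inr (Sum.inl i)) ⁻¹' X)
  rw [Nat.card_eq_fintype_card, Fintype.card_fin] at hcompl
  rw [degIn_spiderTree_root, degIn_spiderTree_root, preimage_compl]
  omega

lemma spiderTree_mid_condition_iff (X : Set (Unit ⊕ Fin k ⊕ Fin k)) (i : Fin k) :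
    degIn (spiderTree k) X (Sum.inr (Sum.inl i)) + 1 ≥
        degIn (spiderTree k) Xᶜ (Sum.inr (Sum.inl i)) ↔
      Sum.inl () ∈ X ∨ Sum.inr (Sum.inr i) ∈ X := by
  rw [degIn_spiderTree_mid, degIn_spiderTree_mid]
  by_cases hr : Sum.inl () ∈ X <;> by_cases hl : Sum.inr (Sum.inr i) ∈ X <;>
    simp [insert_inter_of_mem, insert_inter_of_notMem, singleton_inter_of_mem,
      singleton_inter_eq_empty.2, hr, hl]

end

theorem globallyMinimalDA_spiderTree_general (k : ℕ)
    (A' : Set (Fin k)) (hcard : A'.ncard = (k - 1 + 1) / 2) :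
    IsGloballyMinimalDA (spiderTree k)
      ({Sum.inl ()} ∪ ((fun i => Sum.inr (Sum.inl i)) '' A')) := by
  set A : Set (Unit ⊕ Fin k ⊕ Fin k) := {Sum.inl ()} ∪ (fun i => Sum.inr (Sum.inl i)) '' A'
  have hlegs : (fun i => Sum.inr (Sum.inl i)) ⁻¹' A = A' := by
    ext i
    simp [A]
  refine ⟨⟨Sum.inl (), Or.inl rfl⟩, ?_, ?_⟩
  · rintro v (rfl | ⟨i, -, rfl⟩)
    · rw [spiderTree_root_condition_iff, hlegs]
      omega
    · exact (spiderTree_mid_condition_iff A i).2 (Or.inl (Or.inl rfl))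
  · rintro B hBA ⟨v, hv⟩ hB
    by_cases hr : Sum.inl () ∈ B
    · have hsub : (fun i => Sum.inr (Sum.inl i)) ⁻¹' B ⊂ A' := by
        refine hlegs ▸ ⟨preimage_mono hBA.1, fun h => hBA.2 ?_⟩
        rintro x (rfl | ⟨i, hi, rfl⟩)
        exacts [hr, h (hlegs ▸ hi)]
      have hfew := ncard_lt_ncard hsub
      have hroot := (spiderTree_root_condition_iff B).1 (hB _ hr)
      omega
    · rcases hBA.1 hv with rfl | ⟨i, -, rfl⟩
      · exact hr hv
      · rcases (spiderTree_mid_condition_iff B i).1 (hB _ hv) with h | h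
        · exact hr h
        · simpa [A] using hBA.1 h

/-- For `k ≥ 2` and every `A' ⊆ {u_1,…,u_k}` with
`|A'| = ⌈(k-1)/2⌉`, the set `{r} ∪ A'` is a globally minimal defensive
alliance of the spider tree `T_k`. -/
theorem globallyMinimalDA_spiderTree (k : ℕ) (hk : 2 ≤ k)
    (A' : Set (Fin k)) (hcard : A'.ncard = (k - 1 + 1) / 2) :
    IsGloballyMinimalDA (spiderTree k)
      ({Sum.inl ()} ∪ ((fun i => Sum.inr (Sum.inl i)) '' A')) :=
  globallyMinimalDA_spiderTree_general k A' hcard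
end

section
/- Let T = (V,E) be a finite tree and let I(T) = {v ∈ V : deg_V(v) ∈ {2,3}}. If |I(T)| ≥ |V|/2, then there exist two adjacent vertices of T that both belong to I(T). -/
/-!
If no two vertices of `I(T)` were adjacent, every edge would have at most one end in `I(T)`,
so `2 |I(T)| ≤ ∑_{v ∈ I(T)} deg v ≤ |E| = |V| - 1 < |V|`.
-/

open Finset

namespace SimpleGraph

variable {V : Type*} (G : SimpleGraph V)

theorem degIn_univ (v : V) [Fintype (G.neighborSet v)] : degIn G Set.univ v = G.degree v := by
  have : {u | u ∈ Set.univ ∧ G.Adj v u} = G.neighborSet v := by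
    simp only [Set.mem_univ, true_and, neighborSet]
  rw [degIn, this, Set.ncard_eq_toFinset_card', Set.toFinset_card, card_neighborSet_eq_degree]

variable {G} [∀ v, Fintype (G.neighborSet v)] [Fintype G.edgeSet]

theorem IsIndepSet.sum_degree_le_card_edgeFinset {s : Finset V} (hs : G.IsIndepSet s) :
    ∑ v ∈ s, G.degree v ≤ #G.edgeFinset := by
  classical
  have hdisj : (s : Set V).PairwiseDisjoint (G.incidenceFinset ·) := fun a ha b hb hab => by
    rw [Function.onFun, ← Finset.disjoint_coe, coe_incidenceFinset, coe_incidenceFinset,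
      Set.disjoint_iff_inter_eq_empty]
    exact G.incidenceSet_inter_incidenceSet_of_not_adj (hs ha hb hab) hab
  calc ∑ v ∈ s, G.degree v = #(s.biUnion (G.incidenceFinset ·)) := by
        simp only [card_biUnion hdisj, card_incidenceFinset_eq_degree]
    _ ≤ #G.edgeFinset := card_le_card (biUnion_subset.2 fun v _ => G.incidenceFinset_subset v)

theorem exists_adj_of_card_edgeFinset_lt {s : Finset V} {k : ℕ}
    (hdeg : ∀ v ∈ s, k ≤ G.degree v) (hcard : #G.edgeFinset < k * #s) :
    ∃ a ∈ s, ∃ b ∈ s, G.Adj a b := by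
  by_contra! hindep
  have hs : G.IsIndepSet s := fun a ha b hb _ => hindep a ha b hb
  have : k * #s ≤ ∑ v ∈ s, G.degree v := by
    simpa [mul_comm] using card_nsmul_le_sum s (G.degree ·) k hdeg
  exact (hcard.trans_le (this.trans hs.sum_degree_le_card_edgeFinset)).false

end SimpleGraph

/-- In a finite tree `T`, if `I(T) = {v : deg_V(v) ∈ {2,3}}`
satisfies `|I(T)| ≥ |V|/2`, then some edge of `T` joins two vertices of
`I(T)`. -/
theorem tree_adjacent_low_degree {V : Type*} [Fintype V]
    (T : SimpleGraph V) (hT : T.IsTree)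
    (h : Fintype.card V ≤ 2 * {v | degIn T Set.univ v = 2 ∨ degIn T Set.univ v = 3}.ncard) :
    ∃ a b : V, T.Adj a b ∧
      (degIn T Set.univ a = 2 ∨ degIn T Set.univ a = 3) ∧
      (degIn T Set.univ b = 2 ∨ degIn T Set.univ b = 3) := by
  classical
  simp only [T.degIn_univ] at h ⊢
  set I : Finset V := {v | T.degree v = 2 ∨ T.degree v = 3}
  have hI : {v | T.degree v = 2 ∨ T.degree v = 3}.ncard = #I := by
    simp [I, Set.ncard_eq_toFinset_card']
  have hcard : #T.edgeFinset < 2 * #I := by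
    have := hT.card_edgeFinset
    omega
  obtain ⟨a, ha, b, hb, hab⟩ := SimpleGraph.exists_adj_of_card_edgeFinset_lt
    (fun v hv => by rcases (mem_filter.1 hv).2 with h | h <;> omega) hcard
  exact ⟨a, b, hab, (mem_filter.1 ha).2, (mem_filter.1 hb).2⟩
end

section
/- Let A be a locally minimal defensive alliance of the path P_n. Then A contains no three consecutive vertices; that is, there is no index i with 1 ≤ i ≤ n−2 such that v_i, v_{i+1}, v_{i+2} ∈ A. Equivalently, every connected component of the subgraph of P_n induced by A has at most 2 vertices. -/
open SimpleGraph

section degIn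

variable {V : Type*} (G : SimpleGraph V) {X : Set V} {u v w : V}

lemma degIn_diff_singleton_of_not_adj (h : ¬ G.Adj v w) :
    degIn G (X \ {w}) v = degIn G X v := by
  unfold degIn
  congr 1
  ext u
  simp only [Set.mem_ofPred_eq, Set.mem_sdiff, Set.mem_singleton_iff]
  exact ⟨fun hu => ⟨hu.1.1, hu.2⟩, fun hu => ⟨⟨hu.1, by rintro rfl; exact h hu.2⟩, hu.2⟩⟩

lemma degIn_compl_diff_singleton_of_not_adj (h : ¬ G.Adj v w) :
    degIn G (X \ {w})ᶜ v = degIn G Xᶜ v := by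
  unfold degIn
  congr 1
  ext u
  simp only [Set.mem_ofPred_eq, Set.compl_sdiff, Set.mem_union, Set.mem_singleton_iff]
  exact ⟨fun hu => ⟨hu.1.resolve_left (by rintro rfl; exact h hu.2), hu.2⟩,
    fun hu => ⟨Or.inr hu.1, hu.2⟩⟩

variable [Finite V]

lemma one_le_degIn (hu : u ∈ X) (h : G.Adj v u) : 1 ≤ degIn G X v :=
  (Set.ncard_pos (Set.toFinite _)).mpr ⟨u, hu, h⟩

lemma degIn_le_ncard_neighborSet : degIn G X v ≤ (G.neighborSet v).ncard :=
  Set.ncard_le_ncard fun _ hu => hu.2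

lemma degIn_compl_le_degIn_add_one (hdeg : (G.neighborSet v).ncard ≤ 2) (hu : u ∈ X)
    (h : G.Adj v u) : degIn G Xᶜ v ≤ degIn G X v + 1 := by
  have := degIn_le_ncard_neighborSet G (X := Xᶜ) (v := v)
  have := one_le_degIn G hu h
  omega

end degIn

theorem IsDefensiveAlliance.diff_singleton {V : Type*} [Finite V] {G : SimpleGraph V}
    (hdeg : ∀ v, (G.neighborSet v).ncard ≤ 2) {A : Set V} (hA : IsDefensiveAlliance G A)
    {w : V} (hw : ∀ v ∈ A, G.Adj v w → ∃ u ∈ A \ {w}, G.Adj v u) :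
    IsDefensiveAlliance G (A \ {w}) := by
  rintro v ⟨hvA, -⟩
  by_cases hadj : G.Adj v w
  · obtain ⟨u, hu, hvu⟩ := hw v hvA hadj
    exact degIn_compl_le_degIn_add_one G (hdeg v) hu hvu
  · rw [ge_iff_le, degIn_diff_singleton_of_not_adj G hadj,
      degIn_compl_diff_singleton_of_not_adj G hadj]
    exact hA v hvA

lemma SimpleGraph.ncard_neighborSet_pathGraph_le_two {n : ℕ} (v : Fin n) :
    ((pathGraph n).neighborSet v).ncard ≤ 2 := by
  have hsub : (pathGraph n).neighborSet v ⊆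
      {u | (u : ℕ) + 1 = v} ∪ {u | (v : ℕ) + 1 = u} := fun u hu =>
    (pathGraph_adj.mp hu).symm
  calc _ ≤ _ := Set.ncard_le_ncard hsub
    _ ≤ _ := Set.ncard_union_le _ _
    _ ≤ 1 + 1 := by
      gcongr <;>
        exact Set.ncard_le_one_iff_subsingleton.mpr fun a ha b hb =>
          Fin.ext (by rw [Set.mem_ofPred_eq] at ha hb; omega)

theorem IsLocallyMinimalDA.exists_pred_mem_of_pathGraph {n : ℕ} {A : Set (Fin n)}
    (hA : IsLocallyMinimalDA (pathGraph n) A) {a b c : Fin n}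
    (hb : (b : ℕ) = a + 1) (hc : (c : ℕ) = a + 2) (haA : a ∈ A) (hbA : b ∈ A) (hcA : c ∈ A) :
    ∃ u : Fin n, (u : ℕ) + 1 = a ∧ u ∈ A := by
  obtain ⟨-, hDA, hmin⟩ := hA
  by_contra! hpred
  have hba : b ∈ A \ {a} := ⟨hbA, by rintro rfl; omega⟩
  refine hmin a haA ⟨⟨b, hba⟩, hDA.diff_singleton ncard_neighborSet_pathGraph_le_two ?_⟩
  intro v hvA hva
  rcases pathGraph_adj.mp hva with hva | hva
  · exact absurd hvA (hpred v hva)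
  · refine ⟨c, ⟨hcA, by rintro rfl; omega⟩, pathGraph_adj.mpr (Or.inl ?_)⟩
    omega

/-- A locally minimal defensive alliance of the path `P_n`
contains no three consecutive vertices. -/
theorem locallyMinimalDA_path_no_three_consecutive (n : ℕ) (A : Set (Fin n))
    (hA : IsLocallyMinimalDA (SimpleGraph.pathGraph n) A) :
    ∀ i j l : Fin n, (j : ℕ) = (i : ℕ) + 1 → (l : ℕ) = (i : ℕ) + 2 →
      ¬ (i ∈ A ∧ j ∈ A ∧ l ∈ A) := by
  intro i
  induction hi : (i : ℕ) generalizing i with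
  | zero =>
    rintro j l hj hl ⟨hiA, hjA, hlA⟩
    obtain ⟨u, hu, -⟩ := hA.exists_pred_mem_of_pathGraph (by omega) (by omega) hiA hjA hlA
    omega
  | succ k ih =>
    rintro j l hj hl ⟨hiA, hjA, hlA⟩
    obtain ⟨u, hu, huA⟩ := hA.exists_pred_mem_of_pathGraph (by omega) (by omega) hiA hjA hlA
    exact ih u (by omega) i j (by omega) (by omega) ⟨huA, hiA, hjA⟩
end

section
/- Let n ≥ 2 and let A be a locally minimal defensive alliance of the path P_n. If v_1 ∈ A then A = {v_1}, and if v_n ∈ A then A = {v_n}. -/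
section

open SimpleGraph

variable {V W : Type*} {G : SimpleGraph V} {G' : SimpleGraph W}

lemma degIn_congr {X Y : Set V} {w : V} (h : ∀ u, G.Adj w u → (u ∈ X ↔ u ∈ Y)) :
    degIn G X w = degIn G Y w :=
  congrArg Set.ncard <| Set.ext fun u => and_congr_left (h u)

theorem IsDefensiveAlliance.diff_singleton_s13 {A : Set V} (hA : IsDefensiveAlliance G A) (v : V)
    (hnbr : ∀ w ∈ A \ {v}, G.Adj w v → degIn G (A \ {v})ᶜ w ≤ degIn G (A \ {v}) w + 1) :
    IsDefensiveAlliance G (A \ {v}) := by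
  intro w hw
  by_cases hwv : G.Adj w v
  · exact hnbr w hw hwv
  · have hne : ∀ u, G.Adj w u → u ≠ v := by rintro u hwu rfl; exact hwv hwu
    rw [degIn_congr (X := A \ {v}) (Y := A) fun u hwu => by simp [hne u hwu],
      degIn_congr (X := (A \ {v})ᶜ) (Y := Aᶜ) fun u hwu => by simp [hne u hwu]]
    exact hA w hw.1

lemma degIn_image (e : G ≃g G') (X : Set V) (v : V) :
    degIn G' (e '' X) (e v) = degIn G X v := by
  unfold degIn
  rw [← Set.ncard_image_of_injective _ e.injective]
  congr 1
  ext u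
  constructor
  · rintro ⟨⟨x, hx, rfl⟩, hadj⟩
    exact ⟨x, ⟨hx, e.map_adj_iff.mp hadj⟩, rfl⟩
  · rintro ⟨x, ⟨hx, hadj⟩, rfl⟩
    exact ⟨⟨x, hx, rfl⟩, e.map_adj_iff.mpr hadj⟩

theorem isDefensiveAlliance_image_iff (e : G ≃g G') {A : Set V} :
    IsDefensiveAlliance G' (e '' A) ↔ IsDefensiveAlliance G A := by
  simp only [IsDefensiveAlliance, Set.forall_mem_image, ← Set.image_compl_eq e.bijective,
    degIn_image]

theorem IsLocallyMinimalDA.image (e : G ≃g G') {A : Set V} (hA : IsLocallyMinimalDA G A) :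
    IsLocallyMinimalDA G' (e '' A) := by
  obtain ⟨hne, hda, hmin⟩ := hA
  refine ⟨hne.image e, (isDefensiveAlliance_image_iff e).mpr hda, ?_⟩
  rintro _ ⟨v, hv, rfl⟩
  rw [← Set.image_singleton, ← Set.image_sdiff e.injective, Set.image_nonempty,
    isDefensiveAlliance_image_iff]
  exact hmin v hv

def SimpleGraph.pathGraphRev (n : ℕ) : pathGraph n ≃g pathGraph n where
  toEquiv := Fin.revPerm
  map_rel_iff' {u v} := by
    simp only [Fin.revPerm_apply, pathGraph_adj, Fin.val_rev]
    omega

variable {n : ℕ}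

lemma degIn_compl_pathGraph_le_one {X : Set (Fin n)} {w : Fin n}
    (hpred : ∀ u : Fin n, u.val + 1 = w.val → u ∈ X) : degIn (pathGraph n) Xᶜ w ≤ 1 := by
  refine (Set.ncard_le_one_iff (Set.toFinite _)).mpr fun {a b} ha hb => ?_
  have hsucc : ∀ u ∈ {u | u ∈ Xᶜ ∧ (pathGraph n).Adj w u}, u.val = w.val + 1 := by
    rintro u ⟨huX, hwu⟩
    rw [pathGraph_adj] at hwu
    exact (hwu.resolve_right fun h => huX (hpred u h)).symm
  exact Fin.ext <| (hsucc a ha).trans (hsucc b hb).symm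

theorem IsLocallyMinimalDA.exists_succ_mem_pathGraph {A : Set (Fin n)}
    (hA : IsLocallyMinimalDA (pathGraph n) A) (hnt : A.Nontrivial) (k : Fin n)
    (hrun : Set.Iic k ⊆ A) : ∃ j ∈ A, j.val = k.val + 1 := by
  obtain ⟨-, hda, hmin⟩ := hA
  by_contra! hsucc
  refine hmin k (hrun (Set.mem_Iic.mpr le_rfl))
    ⟨hnt.exists_ne k, IsDefensiveAlliance.diff_singleton_s13 hda k ?_⟩
  rintro w ⟨hwA, -⟩ hadj
  have hwk : w.val + 1 = k.val := by
    rw [pathGraph_adj] at hadj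
    exact hadj.resolve_right (hsucc w hwA ·.symm)
  have hpred : ∀ u : Fin n, u.val + 1 = w.val → u ∈ A \ {k} := fun u hu =>
    ⟨hrun (Fin.le_def.mpr (by omega)), fun h => by rw [Set.mem_singleton_iff] at h; omega⟩
  exact (degIn_compl_pathGraph_le_one hpred).trans (Nat.le_add_left 1 _)

theorem IsLocallyMinimalDA.eq_singleton_of_zero_mem_pathGraph {A : Set (Fin n)}
    (hA : IsLocallyMinimalDA (pathGraph n) A) (hn : 0 < n) (h0 : (⟨0, hn⟩ : Fin n) ∈ A) :
    A = {⟨0, hn⟩} := by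
  refine Set.Subsingleton.eq_singleton_of_mem ?_ h0
  by_contra hsub
  have hnt : A.Nontrivial := Set.not_subsingleton_iff.mp hsub
  have hrun : ∀ k (hk : k < n), Set.Iic (⟨k, hk⟩ : Fin n) ⊆ A := by
    intro k
    induction k with
    | zero =>
      intro hk i hi
      obtain rfl : i = ⟨0, hk⟩ := Fin.ext (Nat.le_zero.mp hi)
      exact h0
    | succ k ih =>
      intro hk i hi
      obtain ⟨j, hjA, hj⟩ := hA.exists_succ_mem_pathGraph hnt _ (ih (by omega))
      rcases Nat.lt_or_eq_of_le (Set.mem_Iic.mp hi) with hlt | heq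
      · exact ih (by omega) (Set.mem_Iic.mpr (Nat.le_of_lt_succ hlt))
      · obtain rfl : i = j := Fin.ext (heq.trans hj.symm)
        exact hjA
  obtain ⟨j, -, hj⟩ := hA.exists_succ_mem_pathGraph hnt ⟨n - 1, by omega⟩ (hrun _ _)
  have hjn := j.isLt
  simp only at hj
  omega

theorem IsLocallyMinimalDA.eq_singleton_of_last_mem_pathGraph {A : Set (Fin n)}
    (hA : IsLocallyMinimalDA (pathGraph n) A) (hn : 0 < n)
    (hlast : (⟨n - 1, by omega⟩ : Fin n) ∈ A) : A = {⟨n - 1, by omega⟩} := by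
  have hrev : pathGraphRev n ⟨n - 1, by omega⟩ = ⟨0, hn⟩ := by
    ext
    simp only [pathGraphRev, RelIso.coe_fn_mk, Fin.revPerm_apply, Fin.val_rev]
    omega
  have hrevA := (hA.image (pathGraphRev n)).eq_singleton_of_zero_mem_pathGraph hn
    ⟨_, hlast, hrev⟩
  rw [← hrev, ← Set.image_singleton] at hrevA
  exact Set.image_injective.mpr (pathGraphRev n).injective hrevA

end

/-- For `n ≥ 2`, if a locally minimal defensive alliance `A` of
the path `P_n` contains the endpoint `v_1` then `A = {v_1}`, and if it
contains `v_n` then `A = {v_n}`. -/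
theorem locallyMinimalDA_path_endpoints (n : ℕ) (hn : 2 ≤ n) (A : Set (Fin n))
    (hA : IsLocallyMinimalDA (SimpleGraph.pathGraph n) A) :
    ((⟨0, by omega⟩ : Fin n) ∈ A → A = {(⟨0, by omega⟩ : Fin n)}) ∧
    ((⟨n - 1, by omega⟩ : Fin n) ∈ A → A = {(⟨n - 1, by omega⟩ : Fin n)}) :=
  ⟨hA.eq_singleton_of_zero_mem_pathGraph (by omega),
    hA.eq_singleton_of_last_mem_pathGraph (by omega)⟩
end

section
/- Define the sequence f by f_1 = 0, f_2 = 1, f_3 = 2 and f_n = f_{n−1} + f_{n−3} + 1 for n ≥ 4. Then for every n ≥ 1, f_n + 1 ≤ 1.4656^n; in particular f_n ≤ 1.4656^n for all n ≥ 1. -/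
/-!
Shifting by one, `g n = f n + 1` satisfies the homogeneous recurrence `g n = g (n-1) + g (n-3)`.
Since `r = 1.4656` satisfies `r ^ 2 + 1 ≤ r ^ 3` (it lies just above the real root of
`x ^ 3 = x ^ 2 + 1`), the bound `g n ≤ r ^ n` propagates from three consecutive values to the next,
and it holds for `n = 1, 2, 3` by direct computation.
-/

theorem le_pow_of_le_add_of_le_pow {g : ℕ → ℝ} {r : ℝ} (hr : r ^ 2 + 1 ≤ r ^ 3)
    (hrec : ∀ n, 1 ≤ n → g (n + 3) ≤ g (n + 2) + g n)
    (h1 : g 1 ≤ r) (h2 : g 2 ≤ r ^ 2) (h3 : g 3 ≤ r ^ 3) (n : ℕ) (hn : 1 ≤ n) :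
    g n ≤ r ^ n := by
  have hr₀ : 0 ≤ r := by nlinarith [sq_nonneg r]
  have step : ∀ m, 1 ≤ m →
      g m ≤ r ^ m ∧ g (m + 1) ≤ r ^ (m + 1) ∧ g (m + 2) ≤ r ^ (m + 2) := by
    intro m hm
    induction m, hm using Nat.le_induction with
    | base => exact ⟨by simpa using h1, h2, h3⟩
    | succ m hm ih =>
      obtain ⟨hm₀, hm₁, hm₂⟩ := ih
      refine ⟨hm₁, hm₂, ?_⟩
      calc g (m + 1 + 2) ≤ g (m + 2) + g m := hrec m hm
        _ ≤ r ^ (m + 2) + r ^ m := add_le_add hm₂ hm₀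
        _ = r ^ m * (r ^ 2 + 1) := by ring
        _ ≤ r ^ m * r ^ 3 := mul_le_mul_of_nonneg_left hr (pow_nonneg hr₀ m)
        _ = r ^ (m + 1 + 2) := by ring
  exact (step n hn).1

/-- With `f_1 = 0`, `f_2 = 1`, `f_3 = 2` and
`f_n = f_{n-1} + f_{n-3} + 1` for `n ≥ 4`, one has `f_n + 1 ≤ 1.4656 ^ n`
for all `n ≥ 1`; in particular `f_n ≤ 1.4656 ^ n`. -/
theorem f_le_growth (f : ℕ → ℕ)
    (h1 : f 1 = 0) (h2 : f 2 = 1) (h3 : f 3 = 2)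
    (hrec : ∀ n, 4 ≤ n → f n = f (n - 1) + f (n - 3) + 1)
    (n : ℕ) (hn : 1 ≤ n) :
    (f n : ℝ) + 1 ≤ 1.4656 ^ n ∧ (f n : ℝ) ≤ 1.4656 ^ n := by
  have hbound : (f n : ℝ) + 1 ≤ 1.4656 ^ n := by
    refine le_pow_of_le_add_of_le_pow (g := fun k => (f k : ℝ) + 1) (by norm_num)
      (fun k hk => ?_) (by norm_num [h1]) (by norm_num [h2]) (by norm_num [h3]) n hn
    have hk' : f (k + 3) = f (k + 2) + f k + 1 := hrec (k + 3) (by omega)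
    simp only [hk', Nat.cast_add, Nat.cast_one]
    linarith
  exact ⟨hbound, by linarith⟩
end
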